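/- arXiv:1909.12326 — 3 statements merged into one kernel-verified Lean document; each statement's English description precedes it below -/
import Mathlib

section
/- Suppose A ⊆ P satisfies the threshold property: g_j²/t_j ≥ Γ(A ∪ P̄) for every j ∈ A, and g_j²/t_j < Γ(A ∪ P̄) for every j ∈ P \ A. Then A is a global maximizer: Γ(A ∪ P̄) ≥ Γ(A' ∪ P̄) for every subset A' ⊆ P. (This is Theorem 1: the output of the greedy sorting algorithm globally maximizes the risk-reduction-per-time ratio when the time function is linear.) -/
/-- Theorem 1 (global optimality of the greedy algorithm for linear time function):
if `A ⊆ P` satisfies the threshold property with respect to the ratio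
`Γ(A ∪ P̄)`, then `A` globally maximizes `Γ(A' ∪ P̄)` over all `A' ⊆ P`. -/
theorem greedy_global_optimal {ι : Type*} [Fintype ι] [DecidableEq ι]
    (P Pbar : Finset ι) (hdisj : Disjoint P Pbar) (hpart : P ∪ Pbar = Finset.univ)
    (g t : ι → ℝ) (ht : ∀ j, 0 < t j)
    (c : ℝ) (hc : 0 ≤ c) (hpos : 0 < c + ∑ j ∈ Pbar, t j)
    (Δ T Γ : Finset ι → ℝ)
    (hΔ : ∀ M, Δ M = ∑ j ∈ M, (g j) ^ 2)
    (hT : ∀ M, T M = c + ∑ j ∈ M, t j)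
    (hΓ : ∀ M, Γ M = Δ M / T M)
    (A : Finset ι) (hA : A ⊆ P)
    (hin : ∀ j ∈ A, (g j) ^ 2 / t j ≥ Γ (A ∪ Pbar))
    (hout : ∀ j ∈ P \ A, (g j) ^ 2 / t j < Γ (A ∪ Pbar)) :
    ∀ A' ⊆ P, Γ (A ∪ Pbar) ≥ Γ (A' ∪ Pbar) := by
  intro A' hA'
  set γ := Γ (A ∪ Pbar) with hγ
  set f : ι → ℝ := fun j => g j ^ 2 - γ * t j with hf
  -- positivity of times
  have hTpos : ∀ B : Finset ι, B ⊆ P → 0 < T (B ∪ Pbar) := by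
    intro B hB
    rw [hT, Finset.sum_union (hdisj.mono_left hB)]
    have : 0 ≤ ∑ j ∈ B, t j := Finset.sum_nonneg fun j _ => (ht j).le
    linarith
  -- key identity: Δ M - γ T M = ∑ f - γ c
  have hkey : ∀ B : Finset ι, Δ B - γ * T B = (∑ j ∈ B, f j) - γ * c := by
    intro B
    simp only [hΔ, hT, hf, Finset.sum_sub_distrib, mul_add, Finset.mul_sum]
    ring
  have hAeq : Δ (A ∪ Pbar) = γ * T (A ∪ Pbar) := by
    rw [hγ, hΓ, div_mul_cancel₀]
    exact (hTpos A hA).ne'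
  -- f nonneg on A, neg on P \ A
  have hfA : ∀ j ∈ A, 0 ≤ f j := by
    intro j hj
    have := (le_div_iff₀ (ht j)).mp (hin j hj)
    simp only [hf]; linarith
  have hfPA : ∀ j ∈ P \ A, f j < 0 := by
    intro j hj
    have := (div_lt_iff₀ (ht j)).mp (hout j hj)
    simp only [hf]; linarith
  -- sum comparison
  have hsum : ∑ j ∈ A' ∪ Pbar, f j ≤ ∑ j ∈ A ∪ Pbar, f j := by
    rw [Finset.sum_union (hdisj.mono_left hA'), Finset.sum_union (hdisj.mono_left hA)]
    have h1 : ∑ j ∈ A', f j ≤ ∑ j ∈ A' ∩ A, f j := by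
      have hsplit := Finset.sum_inter_add_sum_sdiff A' A f
      have h2 : ∑ j ∈ A' \ A, f j ≤ 0 := by
        apply Finset.sum_nonpos
        intro j hj
        exact (hfPA j (Finset.mem_sdiff.mpr ⟨hA' (Finset.mem_sdiff.mp hj).1,
          (Finset.mem_sdiff.mp hj).2⟩)).le
      linarith
    have h3 : ∑ j ∈ A' ∩ A, f j ≤ ∑ j ∈ A, f j :=
      Finset.sum_le_sum_of_subset_of_nonneg Finset.inter_subset_right
        (fun j hj _ => hfA j hj)
    linarith
  have hle : Δ (A' ∪ Pbar) ≤ γ * T (A' ∪ Pbar) := by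
    have e1 := hkey (A' ∪ Pbar)
    have e2 := hkey (A ∪ Pbar)
    rw [hAeq] at e2
    linarith
  rw [ge_iff_le, hΓ (A' ∪ Pbar), div_le_iff₀ (hTpos A' hA')]
  exact hle
end

section
/- Suppose A ⊆ P satisfies the threshold property: g_j²/t_j ≥ Γ(A ∪ P̄) for every j ∈ A, and g_j²/t_j < Γ(A ∪ P̄) for every j ∈ P \ A. Let M := A ∪ P̄ and M' := A' ∪ P̄ for an arbitrary subset A' ⊆ P. Then Δ(M') − Δ(M) ≤ Γ(M) · (T(M') − T(M)). -/
/-- Key step in the proof of Theorem 1: if `A ⊆ P` satisfies the threshold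
property, then for `M := A ∪ P̄` and `M' := A' ∪ P̄` (with `A' ⊆ P` arbitrary)
we have `Δ(M') − Δ(M) ≤ Γ(M) · (T(M') − T(M))`. -/
theorem greedy_delta_bound {ι : Type*} [Fintype ι] [DecidableEq ι]
    (P Pbar : Finset ι) (hdisj : Disjoint P Pbar) (hpart : P ∪ Pbar = Finset.univ)
    (g t : ι → ℝ) (ht : ∀ j, 0 < t j)
    (c : ℝ) (hc : 0 ≤ c) (hpos : 0 < c + ∑ j ∈ Pbar, t j)
    (Δ T Γ : Finset ι → ℝ)
    (hΔ : ∀ M, Δ M = ∑ j ∈ M, (g j) ^ 2)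
    (hT : ∀ M, T M = c + ∑ j ∈ M, t j)
    (hΓ : ∀ M, Γ M = Δ M / T M)
    (A : Finset ι) (hA : A ⊆ P)
    (hin : ∀ j ∈ A, (g j) ^ 2 / t j ≥ Γ (A ∪ Pbar))
    (hout : ∀ j ∈ P \ A, (g j) ^ 2 / t j < Γ (A ∪ Pbar))
    (A' : Finset ι) (hA' : A' ⊆ P) :
    Δ (A' ∪ Pbar) - Δ (A ∪ Pbar) ≤ Γ (A ∪ Pbar) * (T (A' ∪ Pbar) - T (A ∪ Pbar)) := by
  set γ := Γ (A ∪ Pbar) with hγ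
  have hdA : Disjoint A Pbar := hdisj.mono_left hA
  have hdA' : Disjoint A' Pbar := hdisj.mono_left hA'
  have hsum : ∀ (f : ι → ℝ), (∑ j ∈ A' ∪ Pbar, f j) - (∑ j ∈ A ∪ Pbar, f j)
      = (∑ j ∈ A' \ A, f j) - (∑ j ∈ A \ A', f j) := by
    intro f
    rw [Finset.sum_union hdA', Finset.sum_union hdA]
    have h1 := Finset.sum_sdiff (f := f) (Finset.inter_subset_left : A' ∩ A ⊆ A')
    have h2 := Finset.sum_sdiff (f := f) (Finset.inter_subset_left : A ∩ A' ⊆ A)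
    rw [Finset.sdiff_inter_self_left] at h1 h2
    rw [Finset.inter_comm A' A] at h1
    linarith
  have e1 := hsum (fun j => (g j) ^ 2)
  have e2 := hsum t
  have h1 : (∑ j ∈ A' \ A, (g j) ^ 2) ≤ γ * ∑ j ∈ A' \ A, t j := by
    rw [Finset.mul_sum]
    refine Finset.sum_le_sum fun j hj => ?_
    have hj' : j ∈ P \ A := Finset.mem_sdiff.mpr ⟨hA' (Finset.mem_sdiff.mp hj).1,
      (Finset.mem_sdiff.mp hj).2⟩
    have h := (hout j hj').le
    have htj := ht j
    rw [div_le_iff₀ htj] at h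
    linarith
  have h2 : γ * ∑ j ∈ A \ A', t j ≤ (∑ j ∈ A \ A', (g j) ^ 2) := by
    rw [Finset.mul_sum]
    refine Finset.sum_le_sum fun j hj => ?_
    have h := hin j (Finset.mem_sdiff.mp hj).1
    have htj := ht j
    rw [ge_iff_le, le_div_iff₀ htj] at h
    linarith
  rw [hΔ, hΔ, hT, hT]
  have e2' : (c + ∑ j ∈ A' ∪ Pbar, t j) - (c + ∑ j ∈ A ∪ Pbar, t j)
      = (∑ j ∈ A' \ A, t j) - (∑ j ∈ A \ A', t j) := by linarith
  rw [e2', mul_sub]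
  linarith
end

section
/- Suppose A ⊆ P satisfies: for every j ∈ P \ A, g_j²/t_j(A ∪ P̄) < Γ(A ∪ P̄), where t_j(M) := T(M ∪ {j}) − T(M) is the marginal time cost. Then for every j ∈ P \ A, Γ(A ∪ P̄) ≥ Γ((A ∪ {j}) ∪ P̄); that is, adding any single additional prunable index cannot improve the ratio. (This is Theorem 3: local optimality of the greedy algorithm for a general monotone positive time function.) -/
/-- Theorem 3 (local optimality of the greedy algorithm for a general monotone
positive time function `T`): if for every `j ∈ P \ A` the marginal ratio
`g_j² / t_j(A ∪ P̄)` is below the current overall ratio `Γ(A ∪ P̄)`, where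
`t_j(M) := T(M ∪ {j}) − T(M)`, then adding any single additional prunable index
cannot improve the ratio. -/
theorem greedy_local_optimal_generalT {ι : Type*} [Fintype ι] [DecidableEq ι]
    (P Pbar : Finset ι) (hdisj : Disjoint P Pbar) (hpart : P ∪ Pbar = Finset.univ)
    (g : ι → ℝ)
    (T : Finset ι → ℝ)
    (hTpos : ∀ M, 0 < T M)
    (hTmono : ∀ M M' : Finset ι, M ⊆ M' → T M ≤ T M')
    (hTmarg : ∀ (M : Finset ι) (j : ι), j ∉ M → 0 < T (M ∪ {j}) - T M)
    (Δ Γ : Finset ι → ℝ)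
    (hΔ : ∀ M, Δ M = ∑ j ∈ M, (g j) ^ 2)
    (hΓ : ∀ M, Γ M = Δ M / T M)
    (A : Finset ι) (hA : A ⊆ P)
    (hout : ∀ j ∈ P \ A,
      (g j) ^ 2 / (T ((A ∪ Pbar) ∪ {j}) - T (A ∪ Pbar)) < Γ (A ∪ Pbar)) :
    ∀ j ∈ P \ A, Γ (A ∪ Pbar) ≥ Γ ((A ∪ {j}) ∪ Pbar) := by
  intro j hj
  obtain ⟨hjP, hjA⟩ := Finset.mem_sdiff.mp hj
  have hjPbar : j ∉ Pbar := Finset.disjoint_left.mp hdisj hjP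
  set M := A ∪ Pbar with hM
  have hjM : j ∉ M := by
    simp [hM, Finset.mem_union, hjA, hjPbar]
  have hEq : (A ∪ {j}) ∪ Pbar = M ∪ {j} := by
    ext x; simp [hM, Finset.mem_union, or_comm, or_assoc, or_left_comm]
  have hΔM : Δ (M ∪ {j}) = Δ M + (g j) ^ 2 := by
    rw [hΔ, hΔ, Finset.union_comm, ← Finset.insert_eq,
      Finset.sum_insert hjM, add_comm]
  have ht : 0 < T (M ∪ {j}) - T M := hTmarg M j hjM
  have hTM : 0 < T M := hTpos M
  have hlt := hout j hj
  rw [hΓ, div_lt_div_iff₀ ht hTM] at hlt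
  rw [hEq, ge_iff_le, hΓ, hΓ, hΔM,
    div_le_div_iff₀ (hTpos _) hTM]
  nlinarith [hlt]
end
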